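/- Let G be an (n−k)-regular bipartite false twin-free graph on 2n vertices with bipartition A ∪ B and γ_t(G) = γ_gr^t(G) = 6, let a_1 ≠ a_2 be vertices of A, and set B_2 = N(a_1)\N(a_2), B_1 = N(a_2)\N(a_1), B' = N(a_1) ∩ N(a_2), A' = {a ∈ A\{a_1,a_2} : N(a) ⊆ B_1 ∪ B_2 ∪ B'}, and A'' = A \ (A' ∪ {a_1, a_2}). Then for every a'' ∈ A'' and every a ∈ {a_1, a_2} ∪ A', the vertex a'' is adjacent to exactly k − 2 of the vertices in (B_1 ∪ B_2 ∪ B') \ N(a). -/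

import Mathlib

/-- `S` is a total dominating set of `G`: every vertex has a neighbor in `S`. -/
def IsTotalDomSet {V : Type*} (G : SimpleGraph V) (S : Set V) : Prop :=
  ∀ v : V, ∃ u ∈ S, G.Adj v u

/-- `l` is a legal sequence of `G`: the vertices are distinct and every vertex
(except possibly the first) totally dominates a vertex not totally dominated
by the previous vertices. -/
def IsLegalSeq {V : Type*} (G : SimpleGraph V) (l : List V) : Prop :=
  l.Nodup ∧ ∀ i : Fin l.length, 0 < (i : ℕ) →
    ∃ w : V, G.Adj (l.get i) w ∧ ∀ j : Fin l.length, (j : ℕ) < (i : ℕ) → ¬ G.Adj (l.get j) w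

/-- `l` is a total dominating sequence of `G`. -/
def IsTotalDomSeq {V : Type*} (G : SimpleGraph V) (l : List V) : Prop :=
  IsLegalSeq G l ∧ IsTotalDomSet G {v | v ∈ l}

/-- The Grundy total domination number of `G`: the maximum length of a total
dominating sequence. -/
noncomputable def grundyTotalDomNum {V : Type*} (G : SimpleGraph V) : ℕ :=
  sSup {k : ℕ | ∃ l : List V, IsTotalDomSeq G l ∧ l.length = k}

/-- The total domination number of `G`: the minimum cardinality of a total
dominating set. -/
noncomputable def totalDomNum {V : Type*} (G : SimpleGraph V) : ℕ :=
  sInf {k : ℕ | ∃ S : Set V, IsTotalDomSet G S ∧ S.ncard = k}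

/-- `A`, `B` is a bipartition of `G`. -/
def IsBipartitionOf {V : Type*} (G : SimpleGraph V) (A B : Set V) : Prop :=
  (∀ v : V, (v ∈ A ∧ v ∉ B) ∨ (v ∈ B ∧ v ∉ A)) ∧
  ∀ ⦃u v : V⦄, G.Adj u v → (u ∈ A ∧ v ∈ B) ∨ (u ∈ B ∧ v ∈ A)

/-- `G` has no false twins: distinct vertices have distinct open neighborhoods. -/
def FalseTwinFree {V : Type*} (G : SimpleGraph V) : Prop :=
  ∀ u v : V, u ≠ v → G.neighborSet u ≠ G.neighborSet v

/-- `G` has no isolated vertices. -/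
def NoIsolatedVerts {V : Type*} (G : SimpleGraph V) : Prop :=
  ∀ v : V, ∃ u : V, G.Adj v u


/-!
In a bipartite graph with sides `A`, `B` and no isolated vertex, a legal sequence inside `A`
followed by one inside `B` is legal, and a longest legal sequence inside `A` dominates `B`.
Writing `g_A`, `g_B` for the largest lengths of legal sequences inside `A` and `B`, this gives
`γ_t ≤ g_A + g_B ≤ γ_gr^t`, and when `γ_t = γ_gr^t` every set dominating `B` has at least `g_A`
vertices.

If `g_A ≤ 2`, any two vertices of `A` dominate `B`; by regularity every vertex of `A` then misses
at most one vertex of `B`, so two vertices of `B` dominate `A` and `γ_t ≤ 4`. Hence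
`γ_t = γ_gr^t = 6` forces `g_A = g_B = 3`: no two vertices of `A` dominate `B`, but every legal
triple in `A` does. If `y`, `y'` are common non-neighbours of `u ≠ v` in `A`, then `[u, v, w]` is
legal for every `w ∈ N(y)`, so `N(y) ⊆ N(y')`; false twin-freeness makes the common non-neighbour
unique.

For `a₁`, `a₂` this vertex `b₀` satisfies `B₁ ∪ B₂ ∪ B' = B \ {b₀}`, so `a''` is adjacent to `b₀`
and `a` is not. Of the `k` non-neighbours of `a` in `B`, all but the common non-neighbour of `a`
and `a''` are adjacent to `a''`, and removing `b₀` among them leaves `k - 2`.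
-/

section LegalSeq

variable {V : Type*} {G : SimpleGraph V}

theorem isLegalSeq_iff_take {l : List V} :
    IsLegalSeq G l ↔ l.Nodup ∧ ∀ i (hi : i < l.length), 0 < i →
      ∃ w, G.Adj l[i] w ∧ ∀ x ∈ l.take i, ¬ G.Adj x w := by
  refine and_congr_right fun _ => ⟨fun h i hi hi0 => ?_, fun h i hi0 => ?_⟩
  · obtain ⟨w, hw, hprev⟩ := h ⟨i, hi⟩ hi0
    refine ⟨w, hw, fun x hx => ?_⟩
    obtain ⟨j, hj, rfl⟩ := List.mem_take_iff_getElem.1 hx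
    exact hprev ⟨j, (lt_min_iff.1 hj).2⟩ (lt_min_iff.1 hj).1
  · obtain ⟨w, hw, hprev⟩ := h i i.2 hi0
    exact ⟨w, hw, fun j hj => hprev _ (List.mem_take_iff_getElem.2 ⟨j, by omega, rfl⟩)⟩

theorem isLegalSeq_append_singleton_iff {l : List V} {u : V} :
    IsLegalSeq G (l ++ [u]) ↔ IsLegalSeq G l ∧ u ∉ l ∧
      (l ≠ [] → ∃ w, G.Adj u w ∧ ∀ x ∈ l, ¬ G.Adj x w) := by
  have get_left {i} (hi : i < l.length) :
      (l ++ [u])[i]'(by simp only [List.length_append]; omega) = l[i] :=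
    List.getElem_append_left hi
  have take_left {i} (hi : i ≤ l.length) : (l ++ [u]).take i = l.take i :=
    List.take_append_of_le_length hi
  simp only [isLegalSeq_iff_take, List.nodup_append, List.nodup_singleton, List.mem_singleton,
    true_and, forall_eq, List.length_append, List.length_singleton]
  constructor
  · rintro ⟨⟨hnd, hu⟩, h⟩
    refine ⟨⟨hnd, fun i hi hi0 => ?_⟩, fun hul => hu u hul rfl, fun hl => ?_⟩
    · simpa [get_left hi, take_left hi.le] using h i (by omega) hi0
    · simpa [List.getElem_concat_length, List.take_left'] using
        h l.length (by omega) (List.length_pos_iff.2 hl)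
  · rintro ⟨⟨hnd, h⟩, hu, hstep⟩
    refine ⟨⟨hnd, fun x hx hxu => hu (hxu ▸ hx)⟩, fun i hi hi0 => ?_⟩
    rcases Nat.lt_succ_iff_lt_or_eq.1 hi with hi | rfl
    · simpa [get_left hi, take_left hi.le] using h i hi hi0
    · simpa [List.getElem_concat_length, List.take_left'] using
        hstep (List.length_pos_iff.1 hi0)

theorem IsLegalSeq.nil : IsLegalSeq G [] :=
  ⟨List.nodup_nil, fun i => i.elim0⟩

theorem IsLegalSeq.append_singleton_of_adj {l : List V} {u v : V} (hl : IsLegalSeq G l)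
    (hv : ∀ x ∈ l, ¬ G.Adj x v) (huv : G.Adj u v) : IsLegalSeq G (l ++ [u]) :=
  isLegalSeq_append_singleton_iff.2 ⟨hl, fun hu => hv u hu huv, fun _ => ⟨v, huv, hv⟩⟩

theorem isLegalSeq_singleton (u : V) : IsLegalSeq G [u] :=
  isLegalSeq_append_singleton_iff.2 ⟨.nil, List.not_mem_nil, fun h => (h rfl).elim⟩

theorem IsLegalSeq.append {l₁ l₂ : List V} (h₁ : IsLegalSeq G l₁) (h₂ : IsLegalSeq G l₂)
    (hdisj : ∀ x ∈ l₁, ∀ y ∈ l₂, Disjoint (G.neighborSet x) (G.neighborSet y))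
    (hdeg : ∀ y ∈ l₂, (G.neighborSet y).Nonempty) : IsLegalSeq G (l₁ ++ l₂) := by
  induction l₂ using List.reverseRecOn with
  | nil => simpa using h₁
  | append_singleton l y ih =>
    obtain ⟨hl, hyl, hstep⟩ := isLegalSeq_append_singleton_iff.1 h₂
    have hy : y ∈ l ++ [y] := by simp
    rw [← List.append_assoc, isLegalSeq_append_singleton_iff]
    refine ⟨ih hl (fun x hx z hz => hdisj x hx z (by simp [hz]))
      (fun z hz => hdeg z (by simp [hz])), ?_, fun _ => ?_⟩
    · rintro hy'
      rcases List.mem_append.1 hy' with hy₁ | hy₂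
      · obtain ⟨w, hw⟩ := hdeg y hy
        exact Set.disjoint_left.1 (hdisj y hy₁ y hy) hw hw
      · exact hyl hy₂
    · have fresh_l₁ : ∀ w, G.Adj y w → ∀ x ∈ l₁, ¬ G.Adj x w := fun w hw x hx hxw =>
        Set.disjoint_left.1 (hdisj x hx y hy) hxw hw
      rcases eq_or_ne l [] with rfl | hl
      · obtain ⟨w, hw⟩ := hdeg y hy
        exact ⟨w, hw, by simpa using fresh_l₁ w hw⟩
      · obtain ⟨w, hw, hfresh⟩ := hstep hl
        exact ⟨w, hw, fun x hx => (List.mem_append.1 hx).elim (fresh_l₁ w hw x) (hfresh x)⟩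

theorem IsLegalSeq.length_le_grundyTotalDomNum [Fintype V] (hG : NoIsolatedVerts G)
    {l : List V} (hl : IsLegalSeq G l) : l.length ≤ grundyTotalDomNum G := by
  by_cases hdom : IsTotalDomSet G {v | v ∈ l}
  · refine le_csSup ⟨Fintype.card V, ?_⟩ ⟨l, ⟨hl, hdom⟩, rfl⟩
    rintro _ ⟨m, hm, rfl⟩
    exact hm.1.1.length_le_card
  · obtain ⟨v, hv⟩ : ∃ v, ∀ x ∈ l, ¬ G.Adj v x := by simpa [IsTotalDomSet] using hdom
    obtain ⟨u, hvu⟩ := hG v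
    have hlu := hl.append_singleton_of_adj (fun x hx hxv => hv x hx hxv.symm) hvu.symm
    have hcard := hlu.1.length_le_card
    have := hlu.length_le_grundyTotalDomNum hG
    simp only [List.length_append, List.length_singleton] at hcard this
    omega
termination_by Fintype.card V - l.length
decreasing_by simp only [List.length_append, List.length_singleton] at hcard ⊢; omega

end LegalSeq

section Bipartite

variable {V : Type*} {G : SimpleGraph V}

def legalLengthsIn (G : SimpleGraph V) (X : Set V) : Set ℕ :=
  {m | ∃ l : List V, IsLegalSeq G l ∧ (∀ x ∈ l, x ∈ X) ∧ l.length = m}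

noncomputable def maxLegalLengthIn (G : SimpleGraph V) (X : Set V) : ℕ :=
  sSup (legalLengthsIn G X)

def TotallyDominates (G : SimpleGraph V) (S Y : Set V) : Prop :=
  ∀ y ∈ Y, ∃ s ∈ S, G.Adj y s

theorem bddAbove_legalLengthsIn [Fintype V] (X : Set V) : BddAbove (legalLengthsIn G X) := by
  refine ⟨Fintype.card V, ?_⟩
  rintro _ ⟨l, hl, -, rfl⟩
  exact hl.1.length_le_card

theorem length_le_maxLegalLengthIn [Fintype V] {X : Set V} {l : List V} (hl : IsLegalSeq G l)
    (hX : ∀ x ∈ l, x ∈ X) : l.length ≤ maxLegalLengthIn G X :=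
  le_csSup (bddAbove_legalLengthsIn X) ⟨l, hl, hX, rfl⟩

theorem exists_length_eq_maxLegalLengthIn [Fintype V] (X : Set V) :
    ∃ l, IsLegalSeq G l ∧ (∀ x ∈ l, x ∈ X) ∧ l.length = maxLegalLengthIn G X :=
  Nat.sSup_mem (s := legalLengthsIn G X) ⟨0, [], .nil, by simp, rfl⟩ (bddAbove_legalLengthsIn X)

theorem ncard_setOf_mem_le_length (l : List V) : {v | v ∈ l}.ncard ≤ l.length := by
  classical
  rw [← List.coe_toFinset, Set.ncard_coe_finset]
  exact l.toFinset_card_le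

theorem totalDomNum_le_ncard [Finite V] {S : Set V} (hS : IsTotalDomSet G S) :
    totalDomNum G ≤ S.ncard :=
  Nat.sInf_le ⟨S, hS, rfl⟩

-- An isolated vertex leaves no total dominating set, and then `totalDomNum G = sInf ∅ = 0`.
theorem noIsolatedVerts_of_totalDomNum_ne_zero (h : totalDomNum G ≠ 0) : NoIsolatedVerts G := by
  intro v
  obtain ⟨_, S, hS, -⟩ : {k | ∃ S : Set V, IsTotalDomSet G S ∧ S.ncard = k}.Nonempty :=
    Set.nonempty_iff_ne_empty.2 fun he => h (by rw [totalDomNum, he, Nat.sInf_empty])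
  obtain ⟨u, -, hvu⟩ := hS v
  exact ⟨u, hvu⟩

variable {X Y : Set V}

theorem IsBipartitionOf.symm (h : IsBipartitionOf G X Y) : IsBipartitionOf G Y X :=
  ⟨fun v => (h.1 v).symm, fun _ _ huv => (h.2 huv).symm⟩

theorem IsBipartitionOf.mem_or_mem (h : IsBipartitionOf G X Y) (v : V) : v ∈ X ∨ v ∈ Y :=
  (h.1 v).imp And.left And.left

theorem IsBipartitionOf.isBipartiteWith (h : IsBipartitionOf G X Y) : G.IsBipartiteWith X Y where
  disjoint := Set.disjoint_left.2 fun v hX hY => by rcases h.1 v with h' | h' <;> tauto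
  mem_of_adj := h.2

theorem IsBipartitionOf.neighborSet_subset (h : IsBipartitionOf G X Y) {x : V} (hx : x ∈ X) :
    G.neighborSet x ⊆ Y :=
  SimpleGraph.isBipartiteWith_neighborSet_subset h.isBipartiteWith hx

theorem IsBipartitionOf.ncard_add_ncard [Fintype V] (h : IsBipartitionOf G X Y) :
    X.ncard + Y.ncard = Fintype.card V := by
  rw [← Set.ncard_union_eq h.isBipartiteWith.disjoint,
    Set.eq_univ_of_forall (s := X ∪ Y) h.mem_or_mem, Set.ncard_univ, Nat.card_eq_fintype_card]

theorem IsBipartitionOf.isLegalSeq_append (h : IsBipartitionOf G X Y) (hG : NoIsolatedVerts G)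
    {l₁ l₂ : List V} (h₁ : IsLegalSeq G l₁) (h₂ : IsLegalSeq G l₂) (hl₁ : ∀ x ∈ l₁, x ∈ X)
    (hl₂ : ∀ y ∈ l₂, y ∈ Y) : IsLegalSeq G (l₁ ++ l₂) :=
  h₁.append h₂
    (fun x hx y hy => Set.disjoint_of_subset (h.neighborSet_subset (hl₁ x hx))
      (h.symm.neighborSet_subset (hl₂ y hy)) h.isBipartiteWith.disjoint.symm)
    (fun y _ => hG y)

theorem IsBipartitionOf.maxLegalLengthIn_add_le [Fintype V] (h : IsBipartitionOf G X Y)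
    (hG : NoIsolatedVerts G) :
    maxLegalLengthIn G X + maxLegalLengthIn G Y ≤ grundyTotalDomNum G := by
  obtain ⟨l₁, h₁, hX, hlen₁⟩ := exists_length_eq_maxLegalLengthIn (G := G) X
  obtain ⟨l₂, h₂, hY, hlen₂⟩ := exists_length_eq_maxLegalLengthIn (G := G) Y
  have := (h.isLegalSeq_append hG h₁ h₂ hX hY).length_le_grundyTotalDomNum hG
  rwa [List.length_append, hlen₁, hlen₂] at this

theorem IsBipartitionOf.totallyDominates_of_length_eq_maxLegalLengthIn [Fintype V]
    (h : IsBipartitionOf G X Y) (hG : NoIsolatedVerts G) {l : List V} (hl : IsLegalSeq G l)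
    (hX : ∀ x ∈ l, x ∈ X) (hlen : l.length = maxLegalLengthIn G X) :
    TotallyDominates G {v | v ∈ l} Y := by
  intro y hy
  by_contra! hy_free
  obtain ⟨u, hyu⟩ := hG y
  have hlu := hl.append_singleton_of_adj (fun x hx hxy => hy_free x hx hxy.symm) hyu.symm
  have := length_le_maxLegalLengthIn hlu <| by
    simpa [or_imp, forall_and] using ⟨hX, h.symm.neighborSet_subset hy hyu⟩
  simp only [List.length_append, List.length_singleton] at this
  omega

theorem IsBipartitionOf.isTotalDomSet_union (h : IsBipartitionOf G X Y) {S T : Set V}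
    (hS : TotallyDominates G S Y) (hT : TotallyDominates G T X) : IsTotalDomSet G (S ∪ T) := by
  intro v
  rcases h.mem_or_mem v with hv | hv
  · obtain ⟨t, ht, hvt⟩ := hT v hv
    exact ⟨t, .inr ht, hvt⟩
  · obtain ⟨s, hs, hvs⟩ := hS v hv
    exact ⟨s, .inl hs, hvs⟩

theorem IsBipartitionOf.totalDomNum_le_ncard_add [Fintype V] (h : IsBipartitionOf G X Y)
    (hG : NoIsolatedVerts G) {S : Set V} (hS : TotallyDominates G S Y) :
    totalDomNum G ≤ S.ncard + maxLegalLengthIn G Y := by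
  obtain ⟨l, hl, hY, hlen⟩ := exists_length_eq_maxLegalLengthIn (G := G) Y
  have hT := h.symm.totallyDominates_of_length_eq_maxLegalLengthIn hG hl hY hlen
  calc totalDomNum G ≤ (S ∪ {v | v ∈ l}).ncard :=
        totalDomNum_le_ncard (h.isTotalDomSet_union hS hT)
    _ ≤ S.ncard + {v | v ∈ l}.ncard := Set.ncard_union_le _ _
    _ ≤ S.ncard + maxLegalLengthIn G Y := by
      rw [← hlen]
      exact Nat.add_le_add_left (ncard_setOf_mem_le_length l) _

theorem IsBipartitionOf.totalDomNum_le_maxLegalLengthIn_add [Fintype V]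
    (h : IsBipartitionOf G X Y) (hG : NoIsolatedVerts G) :
    totalDomNum G ≤ maxLegalLengthIn G X + maxLegalLengthIn G Y := by
  obtain ⟨l, hl, hX, hlen⟩ := exists_length_eq_maxLegalLengthIn (G := G) X
  have := h.totalDomNum_le_ncard_add hG
    (h.totallyDominates_of_length_eq_maxLegalLengthIn hG hl hX hlen)
  have := ncard_setOf_mem_le_length l
  omega

theorem IsBipartitionOf.maxLegalLengthIn_le_ncard [Fintype V] (h : IsBipartitionOf G X Y)
    (hG : NoIsolatedVerts G) (hγ : grundyTotalDomNum G ≤ totalDomNum G) {S : Set V}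
    (hS : TotallyDominates G S Y) : maxLegalLengthIn G X ≤ S.ncard := by
  have := h.totalDomNum_le_ncard_add hG hS
  have := h.maxLegalLengthIn_add_le hG
  omega

end Bipartite

section Regular

variable {V : Type*} {G : SimpleGraph V} {X Y : Set V} {d : ℕ}

theorem IsBipartitionOf.ncard_eq_ncard [Fintype V] (h : IsBipartitionOf G X Y)
    (hreg : ∀ v, (G.neighborSet v).ncard = d) (hd : 0 < d) : X.ncard = Y.ncard := by
  classical
  have hdeg : ∀ v, G.degree v = d := fun v => by
    rw [← hreg v, ← G.card_neighborSet_eq_degree, Set.ncard_eq_toFinset_card', Set.toFinset_card]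
  have hsum := SimpleGraph.isBipartiteWith_sum_degrees_eq (s := X.toFinset) (t := Y.toFinset)
    (by simpa using h.isBipartiteWith)
  simp only [hdeg, Finset.sum_const, smul_eq_mul] at hsum
  rw [Set.ncard_eq_toFinset_card', Set.ncard_eq_toFinset_card']
  exact Nat.eq_of_mul_eq_mul_right hd hsum

theorem IsBipartitionOf.ncard_eq_of_card_eq_two_mul [Fintype V] (h : IsBipartitionOf G X Y)
    (hreg : ∀ v, (G.neighborSet v).ncard = d) (hd : 0 < d) {n : ℕ}
    (hcard : Fintype.card V = 2 * n) : Y.ncard = n := by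
  have := h.ncard_eq_ncard hreg hd
  have := h.ncard_add_ncard
  omega

theorem IsBipartitionOf.ncard_sdiff_neighborSet [Finite V] (h : IsBipartitionOf G X Y)
    (hreg : ∀ v, (G.neighborSet v).ncard = d) {x : V} (hx : x ∈ X) :
    (Y \ G.neighborSet x).ncard = Y.ncard - d := by
  rw [Set.ncard_sdiff (h.neighborSet_subset hx), hreg]

theorem FalseTwinFree.exists_adj_not_adj [Finite V] (hftf : FalseTwinFree G) {u v : V}
    (huv : u ≠ v) (hdeg : (G.neighborSet u).ncard = (G.neighborSet v).ncard) :
    ∃ w, G.Adj v w ∧ ¬ G.Adj u w := by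
  by_contra! hsub
  exact hftf u v huv (Set.eq_of_subset_of_ncard_le hsub hdeg.le).symm

theorem FalseTwinFree.isLegalSeq_pair [Finite V] (hftf : FalseTwinFree G)
    (hreg : ∀ v, (G.neighborSet v).ncard = d) {u v : V} (huv : u ≠ v) : IsLegalSeq G [u, v] :=
  have ⟨_, hvw, huw⟩ := hftf.exists_adj_not_adj huv (by rw [hreg, hreg])
  (isLegalSeq_singleton u).append_singleton_of_adj (by simpa using huw) hvw

theorem IsBipartitionOf.totallyDominates_pair_of_forall_pair [Fintype V]
    (h : IsBipartitionOf G X Y) (hreg : ∀ v, (G.neighborSet v).ncard = d) (hd : 0 < d)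
    (hX : ∀ u ∈ X, ∀ v ∈ X, u ≠ v → TotallyDominates G {u, v} Y) :
    ∀ u ∈ Y, ∀ v ∈ Y, u ≠ v → TotallyDominates G {u, v} X := by
  intro u hu v hv huv x hx
  have hu_missed : (X \ G.neighborSet u).ncard ≤ 1 := by
    refine (Set.ncard_le_one (Set.toFinite _)).2 fun a ha b hb => by_contra fun hab => ?_
    obtain ⟨s, hs, hus⟩ := hX a ha.1 b hb.1 hab u hu
    rcases hs with rfl | rfl
    exacts [ha.2 hus, hb.2 hus]
  -- every vertex misses `X.ncard - d = Y.ncard - d` vertices of the opposite side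
  have hx_missed : (Y \ G.neighborSet x).ncard ≤ 1 := by
    rwa [h.ncard_sdiff_neighborSet hreg hx, ← h.ncard_eq_ncard hreg hd,
      ← h.symm.ncard_sdiff_neighborSet hreg hu]
  by_contra! hx_free
  exact huv <| (Set.ncard_le_one (Set.toFinite _)).1 hx_missed
    u ⟨hu, hx_free u (by simp)⟩ v ⟨hv, hx_free v (by simp)⟩

end Regular

section GrundyEqTotalDom

variable {V : Type*} [Fintype V] {G : SimpleGraph V} {X Y : Set V} {d : ℕ}

theorem IsBipartitionOf.three_le_maxLegalLengthIn (h : IsBipartitionOf G X Y)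
    (hftf : FalseTwinFree G) (hreg : ∀ v, (G.neighborSet v).ncard = d) (hG : NoIsolatedVerts G)
    (hγ : grundyTotalDomNum G ≤ totalDomNum G) (hγ₄ : 4 < totalDomNum G) (hY : 1 < Y.ncard) :
    3 ≤ maxLegalLengthIn G X := by
  by_contra! hlt
  obtain ⟨y, hy, y', hy', hyy'⟩ := (Set.one_lt_ncard (Set.toFinite _)).1 hY
  have hd : 0 < d := hreg y ▸ (Set.ncard_pos (Set.toFinite _)).2 (hG y)
  have hpairs : ∀ u ∈ X, ∀ v ∈ X, u ≠ v → TotallyDominates G {u, v} Y := by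
    intro u hu v hv huv b hb
    by_contra! hb_free
    obtain ⟨z, hbz⟩ := hG b
    have hl := (hftf.isLegalSeq_pair hreg huv).append_singleton_of_adj (u := z)
      (fun x hx hxb => hb_free x (by simpa using hx) hxb.symm) hbz.symm
    have := length_le_maxLegalLengthIn hl <| by
      simpa [or_imp, forall_and] using ⟨hu, hv, h.symm.neighborSet_subset hb hbz⟩
    simp only [List.length_append, List.length_cons] at this
    omega
  have hgY := h.symm.maxLegalLengthIn_le_ncard hG hγ
    (h.totallyDominates_pair_of_forall_pair hreg hd hpairs y hy y' hy' hyy')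
  rw [Set.ncard_pair hyy'] at hgY
  have := h.totalDomNum_le_maxLegalLengthIn_add hG
  omega

theorem IsBipartitionOf.maxLegalLengthIn_eq_three (h : IsBipartitionOf G X Y)
    (hftf : FalseTwinFree G) (hreg : ∀ v, (G.neighborSet v).ncard = d)
    (ht : totalDomNum G = 6) (hg : grundyTotalDomNum G = 6) (hX : 1 < X.ncard)
    (hY : 1 < Y.ncard) : maxLegalLengthIn G X = 3 := by
  have hG := noIsolatedVerts_of_totalDomNum_ne_zero (G := G) (by omega)
  have := h.three_le_maxLegalLengthIn hftf hreg hG (by omega) (by omega) hY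
  have := h.symm.three_le_maxLegalLengthIn hftf hreg hG (by omega) (by omega) hX
  have := h.maxLegalLengthIn_add_le hG
  omega

theorem IsBipartitionOf.exists_not_adj_not_adj (h : IsBipartitionOf G X Y)
    (hftf : FalseTwinFree G) (hreg : ∀ v, (G.neighborSet v).ncard = d)
    (ht : totalDomNum G = 6) (hg : grundyTotalDomNum G = 6) (hY : 1 < Y.ncard) {u v : V}
    (hu : u ∈ X) (hv : v ∈ X) (huv : u ≠ v) : ∃ y ∈ Y, ¬ G.Adj u y ∧ ¬ G.Adj v y := by
  by_contra! hcov
  have hS : TotallyDominates G {u, v} Y := fun y hy => by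
    by_cases hyu : G.Adj y u
    · exact ⟨u, by simp, hyu⟩
    · exact ⟨v, by simp, (hcov y hy fun h' => hyu h'.symm).symm⟩
  have hG := noIsolatedVerts_of_totalDomNum_ne_zero (G := G) (by omega)
  have := h.maxLegalLengthIn_le_ncard hG (by omega) hS
  rw [Set.ncard_pair huv, h.maxLegalLengthIn_eq_three hftf hreg ht hg
    ((Set.one_lt_ncard (Set.toFinite _)).2 ⟨u, hu, v, hv, huv⟩) hY] at this
  omega

theorem IsBipartitionOf.neighborSet_subset_of_not_adj (h : IsBipartitionOf G X Y)
    (hftf : FalseTwinFree G) (hreg : ∀ v, (G.neighborSet v).ncard = d)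
    (ht : totalDomNum G = 6) (hg : grundyTotalDomNum G = 6) (hY : 1 < Y.ncard) {u v y y' : V}
    (hu : u ∈ X) (hv : v ∈ X) (huv : u ≠ v) (hy : y ∈ Y) (hy' : y' ∈ Y) (huy : ¬ G.Adj u y)
    (hvy : ¬ G.Adj v y) (huy' : ¬ G.Adj u y') (hvy' : ¬ G.Adj v y') :
    G.neighborSet y ⊆ G.neighborSet y' := by
  intro w hyw
  by_contra hy'w
  have hG := noIsolatedVerts_of_totalDomNum_ne_zero (G := G) (by omega)
  obtain ⟨z, hy'z⟩ := hG y'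
  -- a legal sequence of length 4 in `X`, against `maxLegalLengthIn G X = 3`
  have hl : IsLegalSeq G ([u, v] ++ [w] ++ [z]) :=
    ((hftf.isLegalSeq_pair hreg huv).append_singleton_of_adj (by simp [huy, hvy]) hyw.symm)
      |>.append_singleton_of_adj (by simpa [huy', hvy'] using fun h' => hy'w h'.symm) hy'z.symm
  have := length_le_maxLegalLengthIn hl <| by
    simpa [or_imp, forall_and] using
      ⟨hu, hv, h.symm.neighborSet_subset hy hyw, h.symm.neighborSet_subset hy' hy'z⟩
  rw [h.maxLegalLengthIn_eq_three hftf hreg ht hg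
    ((Set.one_lt_ncard (Set.toFinite _)).2 ⟨u, hu, v, hv, huv⟩) hY] at this
  simp at this

theorem IsBipartitionOf.exists_neighborSet_union_eq (h : IsBipartitionOf G X Y)
    (hftf : FalseTwinFree G) (hreg : ∀ v, (G.neighborSet v).ncard = d)
    (ht : totalDomNum G = 6) (hg : grundyTotalDomNum G = 6) (hY : 1 < Y.ncard) {u v : V}
    (hu : u ∈ X) (hv : v ∈ X) (huv : u ≠ v) :
    ∃ y ∈ Y, G.neighborSet u ∪ G.neighborSet v = Y \ {y} := by
  obtain ⟨y, hy, huy, hvy⟩ := h.exists_not_adj_not_adj hftf hreg ht hg hY hu hv huv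
  refine ⟨y, hy, Set.ext fun y' => ⟨?_, fun ⟨hy', hy'y⟩ => by_contra fun hy'N => hy'y ?_⟩⟩
  · rintro (hy' | hy')
    · exact ⟨h.neighborSet_subset hu hy', by rintro rfl; exact huy hy'⟩
    · exact ⟨h.neighborSet_subset hv hy', by rintro rfl; exact hvy hy'⟩
  · simp only [Set.mem_union, SimpleGraph.mem_neighborSet, not_or] at hy'N
    exact Set.mem_singleton_iff.2 <| by_contra fun hne => hftf y' y hne <| subset_antisymm
      (h.neighborSet_subset_of_not_adj hftf hreg ht hg hY hu hv huv hy' hy hy'N.1 hy'N.2 huy hvy)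
      (h.neighborSet_subset_of_not_adj hftf hreg ht hg hY hu hv huv hy hy' huy hvy hy'N.1 hy'N.2)

theorem IsBipartitionOf.ncard_sdiff_neighborSet_inter_neighborSet (h : IsBipartitionOf G X Y)
    (hftf : FalseTwinFree G) (hreg : ∀ v, (G.neighborSet v).ncard = d)
    (ht : totalDomNum G = 6) (hg : grundyTotalDomNum G = 6) (hY : 1 < Y.ncard) {u v : V}
    (hu : u ∈ X) (hv : v ∈ X) (huv : u ≠ v) :
    ((Y \ G.neighborSet u) ∩ G.neighborSet v).ncard = Y.ncard - d - 1 := by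
  obtain ⟨y, hy, hunion⟩ := h.exists_neighborSet_union_eq hftf hreg ht hg hY hu hv huv
  have hyu : y ∉ G.neighborSet u := fun hyu => (hunion ▸ Set.mem_union_left _ hyu).2 rfl
  have : (Y \ G.neighborSet u) ∩ G.neighborSet v = (Y \ G.neighborSet u) \ {y} := by
    ext w
    refine ⟨fun ⟨hwu, hwv⟩ => ⟨hwu, fun hwy => ?_⟩, fun ⟨hwu, hwy⟩ => ⟨hwu, ?_⟩⟩
    · exact (hunion ▸ Set.mem_union_right _ hwv : w ∈ Y \ {y}).2 hwy
    · exact (hunion ▸ ⟨hwu.1, hwy⟩ : w ∈ G.neighborSet u ∪ G.neighborSet v).resolve_left hwu.2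
  rw [this, Set.ncard_sdiff_singleton_of_mem (s := Y \ G.neighborSet u) ⟨hy, hyu⟩,
    h.ncard_sdiff_neighborSet hreg hu]

theorem IsBipartitionOf.ncard_sdiff_singleton_sdiff_inter_neighborSet
    (h : IsBipartitionOf G X Y) (hftf : FalseTwinFree G) (hreg : ∀ v, (G.neighborSet v).ncard = d)
    (ht : totalDomNum G = 6) (hg : grundyTotalDomNum G = 6) (hY : 1 < Y.ncard) {u v y : V}
    (hu : u ∈ X) (hv : v ∈ X) (hy : y ∈ Y) (huy : ¬ G.Adj u y) (hvy : G.Adj v y) :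
    (((Y \ {y}) \ G.neighborSet u) ∩ G.neighborSet v).ncard = Y.ncard - d - 2 := by
  have huv : u ≠ v := by rintro rfl; exact huy hvy
  have hsplit : ((Y \ {y}) \ G.neighborSet u) ∩ G.neighborSet v
      = ((Y \ G.neighborSet u) ∩ G.neighborSet v) \ {y} := by
    ext
    simp only [Set.mem_inter_iff, Set.mem_sdiff]
    tauto
  rw [hsplit, Set.ncard_sdiff_singleton_of_mem (s := (Y \ G.neighborSet u) ∩ G.neighborSet v)
    ⟨⟨hy, huy⟩, hvy⟩, h.ncard_sdiff_neighborSet_inter_neighborSet hftf hreg ht hg hY hu hv huv]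
  omega

end GrundyEqTotalDom

/-- Every vertex of `A''` is adjacent to exactly `k − 2` of the
non-neighbors in `B₁ ∪ B₂ ∪ B'` of each vertex of `{a₁, a₂} ∪ A'`. -/
theorem claim_neighbors_A''
    {V : Type*} [Fintype V] (G : SimpleGraph V) (n k : ℕ) (A B : Set V)
    (hbip : IsBipartitionOf G A B) (hftf : FalseTwinFree G)
    (hcard : Fintype.card V = 2 * n)
    (hreg : ∀ v : V, (G.neighborSet v).ncard = n - k)
    (ht : totalDomNum G = 6) (hg : grundyTotalDomNum G = 6)
    (a₁ a₂ : V) (ha₁ : a₁ ∈ A) (ha₂ : a₂ ∈ A) (hne : a₁ ≠ a₂)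
    (B₁ B₂ B' A' : Set V)
    (hB₂ : B₂ = G.neighborSet a₁ \ G.neighborSet a₂)
    (hB₁ : B₁ = G.neighborSet a₂ \ G.neighborSet a₁)
    (hB' : B' = G.neighborSet a₁ ∩ G.neighborSet a₂)
    (hA' : A' = {a ∈ A \ {a₁, a₂} | G.neighborSet a ⊆ B₁ ∪ B₂ ∪ B'})
    (A'' : Set V) (hA'' : A'' = A \ (A' ∪ {a₁, a₂}))
    (a'' : V) (ha'' : a'' ∈ A'')
    (a : V) (ha : a ∈ ({a₁, a₂} : Set V) ∪ A') :
    (((B₁ ∪ B₂ ∪ B') \ G.neighborSet a) ∩ G.neighborSet a'').ncard = k - 2 := by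
  have hG := noIsolatedVerts_of_totalDomNum_ne_zero (G := G) (by omega)
  have hd : 0 < n - k := hreg a₁ ▸ (Set.ncard_pos (Set.toFinite _)).2 (hG a₁)
  have hBn : B.ncard = n := hbip.ncard_eq_of_card_eq_two_mul hreg hd hcard
  have hB : 1 < B.ncard := by
    rw [hBn, ← hbip.symm.ncard_eq_of_card_eq_two_mul hreg hd hcard]
    exact (Set.one_lt_ncard (Set.toFinite _)).2 ⟨a₁, ha₁, a₂, ha₂, hne⟩
  obtain ⟨b₀, hb₀, hunion⟩ := hbip.exists_neighborSet_union_eq hftf hreg ht hg hB ha₁ ha₂ hne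
  have hB₀ : B₁ ∪ B₂ ∪ B' = B \ {b₀} := by
    rw [← hunion, hB₁, hB₂, hB']
    ext
    simp only [Set.mem_union, Set.mem_sdiff, Set.mem_inter_iff]
    tauto
  rw [hB₀] at hA'
  obtain ⟨haA, haN⟩ : a ∈ A ∧ G.neighborSet a ⊆ B \ {b₀} := by
    rcases ha with (rfl | rfl) | ha
    · exact ⟨ha₁, hunion ▸ Set.subset_union_left⟩
    · exact ⟨ha₂, hunion ▸ Set.subset_union_right⟩
    · exact ⟨(hA' ▸ ha).1.1, (hA' ▸ ha).2⟩
  obtain ⟨ha''A, ha''b₀⟩ : a'' ∈ A ∧ G.Adj a'' b₀ := by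
    rw [hA'', hA'] at ha''
    refine ⟨ha''.1, by_contra fun hb => ha''.2 ?_⟩
    by_cases h : a'' ∈ ({a₁, a₂} : Set V)
    · exact .inr h
    · exact .inl ⟨⟨ha''.1, h⟩, fun w hw =>
        ⟨hbip.neighborSet_subset ha''.1 hw, by rintro rfl; exact hb hw⟩⟩
  rw [hB₀, hbip.ncard_sdiff_singleton_sdiff_inter_neighborSet hftf hreg ht hg hB haA ha''A hb₀
    (fun hb => (haN hb).2 rfl) ha''b₀, hBn]
  omega
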